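/- For invertible real n×n matrices A and B, the product of the k largest singular values of AB is at most the product of the k largest singular values of A times the product of the k largest singular values of B, for every k = 1,...,n (Horn inequality). -/

import Mathlib

open Matrix Filter

/-- The k-th largest singular value (0-indexed) of a real square matrix:
square roots of the eigenvalues of `Xᵀ * X`, sorted in decreasing order. -/
noncomputable def svalDesc {n : ℕ} (X : Matrix (Fin n) (Fin n) ℝ) (k : Fin n) : ℝ :=
  Real.sqrt (((show (Xᵀ * X).IsHermitian by
      simpa [Matrix.conjTranspose_eq_transpose_of_trivial] using
        Matrix.isHermitian_conjTranspose_mul_self X).eigenvalues ∘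
    Tuple.sort ((show (Xᵀ * X).IsHermitian by
      simpa [Matrix.conjTranspose_eq_transpose_of_trivial] using
        Matrix.isHermitian_conjTranspose_mul_self X).eigenvalues)) k.rev)

/-- Euclidean norm of the j-th column of X. -/
noncomputable def colNorm {n : ℕ} (X : Matrix (Fin n) (Fin n) ℝ) (j : Fin n) : ℝ :=
  Real.sqrt (∑ i, (X i j) ^ 2)

/-! Let `m = k + 1`. For any `n × m` matrix `M`, diagonalising `XᵀX` and expanding by
Cauchy–Binet gives `det (Mᵀ (XᵀX) M) ≤ σ₁(X)²⋯σₘ(X)² · det (MᵀM)`, with equality when the columns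
of `M` are orthonormal eigenvectors for the top `m` eigenvalues. Take such a `W` for `AB`; then
with `M = BW`,
`σ₁(AB)²⋯σₘ(AB)² = det ((BW)ᵀ (AᵀA) (BW)) ≤ σ₁(A)²⋯σₘ(A)² · det (Wᵀ (BᵀB) W)
  ≤ σ₁(A)²⋯σₘ(A)² · σ₁(B)²⋯σₘ(B)²`. -/

open Finset

namespace Matrix

variable {ι κ R : Type*} [Fintype ι] [Fintype κ] [DecidableEq κ] [CommRing R]

theorem det_transpose_mul_eq_sum (N M : Matrix ι κ R) :
    det (Nᵀ * M) = ∑ g : κ → ι, (∏ q, N (g q) q) * det (M.submatrix g id) := by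
  have hrows : Nᵀ * M = fun q => ∑ i, N i q • M i := by
    ext q j; simp [Matrix.mul_apply, Finset.sum_apply]
  change detRowAlternating (Nᵀ * M) =
    ∑ g : κ → ι, (∏ q, N (g q) q) * detRowAlternating fun q => M (g q)
  rw [hrows, ← AlternatingMap.coe_multilinearMap, MultilinearMap.map_sum]
  simp_rw [AlternatingMap.coe_multilinearMap, AlternatingMap.map_smul_univ, smul_eq_mul]

theorem det_transpose_mul_eq_sum_perm (N M : Matrix ι κ R) (σ : Equiv.Perm κ) :
    det (Nᵀ * M) =
      ∑ g : κ → ι, (Equiv.Perm.sign σ : R) * (∏ q, N (g (σ q)) q) * det (M.submatrix g id) := by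
  rw [det_transpose_mul_eq_sum, ← (σ.symm.arrowCongr (Equiv.refl ι)).sum_comp]
  refine sum_congr rfl fun g _ => ?_
  change (∏ q, N (g (σ q)) q) * det ((M.submatrix g id).submatrix σ id) = _
  rw [det_permute]
  ring

/-- Cauchy–Binet, summed over all maps `κ → ι` rather than over subsets, hence the factorial. -/
theorem factorial_card_mul_det_transpose_mul (N M : Matrix ι κ R) :
    ((Fintype.card κ).factorial : R) * det (Nᵀ * M) =
      ∑ g : κ → ι, det (N.submatrix g id) * det (M.submatrix g id) := by
  calc ((Fintype.card κ).factorial : R) * det (Nᵀ * M)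
      = ∑ σ : Equiv.Perm κ, ∑ g : κ → ι,
          (Equiv.Perm.sign σ : R) * (∏ q, N (g (σ q)) q) * det (M.submatrix g id) := by
        simp_rw [← det_transpose_mul_eq_sum_perm, sum_const, card_univ, Fintype.card_perm,
          nsmul_eq_mul]
    _ = ∑ g : κ → ι, det (N.submatrix g id) * det (M.submatrix g id) := by
        rw [sum_comm]
        refine sum_congr rfl fun g _ => ?_
        rw [← sum_mul, det_apply' (N.submatrix g id)]
        rfl

omit [Fintype ι] in
theorem det_submatrix_eq_zero_of_not_injective {g : κ → ι} (hg : ¬ Function.Injective g)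
    (M : Matrix ι κ R) : det (M.submatrix g id) = 0 := by
  obtain ⟨a, b, hab, hne⟩ := Function.not_injective_iff.mp hg
  exact det_zero_of_row_eq hne (by ext; simp [hab])

theorem det_transpose_mul_diagonal_mul_le [DecidableEq ι] [LinearOrder R]
    [IsStrictOrderedRing R] {d : ι → R} {P : R}
    (hP : ∀ s : Finset ι, #s = Fintype.card κ → ∏ i ∈ s, d i ≤ P) (M : Matrix ι κ R) :
    det (Mᵀ * diagonal d * M) ≤ P * det (Mᵀ * M) := by
  have hterm (g : κ → ι) : det ((diagonal d * M).submatrix g id) * det (M.submatrix g id) ≤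
      P * (det (M.submatrix g id) * det (M.submatrix g id)) := by
    have hsub : (diagonal d * M).submatrix g id = diagonal (d ∘ g) * M.submatrix g id := by
      ext; simp [diagonal_mul]
    rw [hsub, det_mul, det_diagonal, mul_assoc]
    by_cases hg : Function.Injective g
    · refine mul_le_mul_of_nonneg_right ?_ (mul_self_nonneg _)
      rw [Function.comp_def, ← prod_image fun a _ b _ h => hg h]
      exact hP _ (by rw [card_image_of_injective _ hg, card_univ])
    · simp [det_submatrix_eq_zero_of_not_injective hg]
  have hfact : (0 : R) < (Fintype.card κ).factorial := by positivity
  refine le_of_mul_le_mul_left ?_ hfact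
  have hsym : Mᵀ * diagonal d * M = (diagonal d * M)ᵀ * M := by
    rw [transpose_mul, diagonal_transpose]
  rw [mul_left_comm, hsym, factorial_card_mul_det_transpose_mul,
    factorial_card_mul_det_transpose_mul, mul_sum]
  exact sum_le_sum fun g _ => hterm g

end Matrix

theorem Finset.prod_le_prod_Iic_of_antitone {ι R : Type*} [LinearOrder ι]
    [LocallyFiniteOrderBot ι] [CommSemiring R] [PartialOrder R] [IsOrderedRing R]
    {f : ι → R} (hf : Antitone f) (h0 : ∀ i, 0 ≤ f i) {s : Finset ι} {k : ι}
    (hs : #s = #(Iic k)) : ∏ i ∈ s, f i ≤ ∏ i ∈ Iic k, f i := by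
  have hcard : #(s \ Iic k) = #(Iic k \ s) := by
    have := card_sdiff_add_card_inter s (Iic k)
    have := card_sdiff_add_card_inter (Iic k) s
    rw [inter_comm] at this
    omega
  have hout : ∏ i ∈ s \ Iic k, f i ≤ ∏ i ∈ Iic k \ s, f i :=
    calc ∏ i ∈ s \ Iic k, f i ≤ ∏ _i ∈ s \ Iic k, f k :=
          prod_le_prod (fun i _ => h0 i) fun i hi =>
            hf (le_of_not_ge (by simpa using (mem_sdiff.mp hi).2))
      _ = ∏ _i ∈ Iic k \ s, f k := by rw [prod_const, prod_const, hcard]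
      _ ≤ ∏ i ∈ Iic k \ s, f i :=
          prod_le_prod (fun _ _ => h0 k) fun i hi => hf (mem_Iic.mp (mem_sdiff.mp hi).1)
  rw [← prod_inter_mul_prod_sdiff s (Iic k), ← prod_inter_mul_prod_sdiff (Iic k) s, inter_comm]
  exact mul_le_mul_of_nonneg_left hout (prod_nonneg fun i _ => h0 i)

theorem Tuple.prod_le_prod_Iic_sort_rev {n : ℕ} {R : Type*} [CommSemiring R] [LinearOrder R]
    [IsOrderedRing R] {f : Fin n → R} (h0 : ∀ i, 0 ≤ f i) {s : Finset (Fin n)} {k : Fin n}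
    (hs : #s = k + 1) : ∏ i ∈ s, f i ≤ ∏ i ∈ Iic k, f (Tuple.sort f i.rev) := by
  set π : Equiv.Perm (Fin n) := Fin.revPerm.trans (Tuple.sort f)
  have hanti : Antitone fun i => f (π i) := (Tuple.monotone_sort f).comp_antitone Fin.rev_anti
  calc ∏ i ∈ s, f i = ∏ i ∈ s.map π.symm.toEmbedding, f (π i) := by simp
    _ ≤ ∏ i ∈ Iic k, f (π i) :=
        prod_le_prod_Iic_of_antitone hanti (fun _ => h0 _) (by rw [card_map, hs, Fin.card_Iic])

namespace Matrix.IsHermitian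

variable {ι : Type*} [Fintype ι] [DecidableEq ι] {H : Matrix ι ι ℝ} (hH : H.IsHermitian)

theorem eq_eigenvectorUnitary_mul_diagonal_mul_transpose :
    H = (hH.eigenvectorUnitary : Matrix ι ι ℝ) * diagonal hH.eigenvalues *
      (hH.eigenvectorUnitary : Matrix ι ι ℝ)ᵀ := by
  conv_lhs => rw [hH.spectral_theorem]
  simp [star_eq_conjTranspose]

theorem eigenvectorUnitary_transpose_mul_self :
    (hH.eigenvectorUnitary : Matrix ι ι ℝ)ᵀ * hH.eigenvectorUnitary = 1 := by
  simpa [star_eq_conjTranspose] using Unitary.coe_star_mul_self hH.eigenvectorUnitary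

theorem eigenvectorUnitary_mul_transpose_self :
    (hH.eigenvectorUnitary : Matrix ι ι ℝ) * (hH.eigenvectorUnitary : Matrix ι ι ℝ)ᵀ = 1 := by
  simpa [star_eq_conjTranspose] using Unitary.coe_mul_star_self hH.eigenvectorUnitary

theorem transpose_eigenvectorUnitary_mul_mul_eigenvectorUnitary :
    (hH.eigenvectorUnitary : Matrix ι ι ℝ)ᵀ * H * hH.eigenvectorUnitary =
      diagonal hH.eigenvalues := by
  simpa [star_eq_conjTranspose] using hH.conjStarAlgAut_star_eigenvectorUnitary

theorem exists_transpose_mul_self_eq_one_det_eq_prod (s : Finset ι) :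
    ∃ W : Matrix ι s ℝ, Wᵀ * W = 1 ∧ det (Wᵀ * H * W) = ∏ i ∈ s, hH.eigenvalues i := by
  set U : Matrix ι ι ℝ := (hH.eigenvectorUnitary : Matrix ι ι ℝ)
  set W : Matrix ι s ℝ := U.submatrix id Subtype.val
  have hcompress (K : Matrix ι ι ℝ) :
      Wᵀ * K * W = (Uᵀ * K * U).submatrix Subtype.val Subtype.val := by
    rw [submatrix_mul _ _ _ id _ Function.bijective_id,
      submatrix_mul _ _ _ id _ Function.bijective_id, submatrix_id_id, transpose_submatrix]
  refine ⟨W, ?_, ?_⟩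
  · have hUU : Uᵀ * U = 1 := hH.eigenvectorUnitary_transpose_mul_self
    simpa [hUU, submatrix_one _ Subtype.val_injective] using hcompress 1
  · rw [hcompress, transpose_eigenvectorUnitary_mul_mul_eigenvectorUnitary,
      submatrix_diagonal _ _ Subtype.val_injective, det_diagonal]
    exact prod_coe_sort s hH.eigenvalues

theorem det_transpose_mul_mul_le {κ : Type*} [Fintype κ] [DecidableEq κ] {P : ℝ}
    (hP : ∀ s : Finset ι, #s = Fintype.card κ → ∏ i ∈ s, hH.eigenvalues i ≤ P)
    (M : Matrix ι κ ℝ) : det (Mᵀ * H * M) ≤ P * det (Mᵀ * M) := by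
  set U : Matrix ι ι ℝ := (hH.eigenvectorUnitary : Matrix ι ι ℝ)
  have hspec : H = U * diagonal hH.eigenvalues * Uᵀ :=
    hH.eq_eigenvectorUnitary_mul_diagonal_mul_transpose
  have hconj : Mᵀ * H * M = (Uᵀ * M)ᵀ * diagonal hH.eigenvalues * (Uᵀ * M) := by
    conv_lhs => rw [hspec]
    simp only [transpose_mul, transpose_transpose, Matrix.mul_assoc]
  have hgram : Mᵀ * M = (Uᵀ * M)ᵀ * (Uᵀ * M) := by
    rw [transpose_mul, transpose_transpose, Matrix.mul_assoc, ← Matrix.mul_assoc U,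
      eigenvectorUnitary_mul_transpose_self, Matrix.one_mul]
  rw [hconj, hgram]
  exact det_transpose_mul_diagonal_mul_le hP _

end Matrix.IsHermitian

section SingularValues

variable {n : ℕ} (X : Matrix (Fin n) (Fin n) ℝ) (k : Fin n)

theorem sq_prod_svalDesc :
    (∏ i ∈ Iic k, svalDesc X i) ^ 2 =
      ∏ i ∈ Iic k, (isHermitian_conjTranspose_mul_self X).eigenvalues
        (Tuple.sort (isHermitian_conjTranspose_mul_self X).eigenvalues i.rev) := by
  rw [← prod_pow]
  exact prod_congr rfl fun i _ =>
    Real.sq_sqrt ((posSemidef_conjTranspose_mul_self X).eigenvalues_nonneg _)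

theorem det_transpose_mul_mul_le_sq_prod_svalDesc {κ : Type*} [Fintype κ] [DecidableEq κ]
    (M : Matrix (Fin n) κ ℝ) (hκ : Fintype.card κ = k + 1) :
    det (Mᵀ * (Xᵀ * X) * M) ≤ (∏ i ∈ Iic k, svalDesc X i) ^ 2 * det (Mᵀ * M) := by
  rw [sq_prod_svalDesc]
  exact (isHermitian_conjTranspose_mul_self X).det_transpose_mul_mul_le
    (fun s hs => Tuple.prod_le_prod_Iic_sort_rev
      (posSemidef_conjTranspose_mul_self X).eigenvalues_nonneg (hs.trans hκ)) M

theorem exists_det_transpose_mul_mul_eq_sq_prod_svalDesc :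
    ∃ (s : Finset (Fin n)) (W : Matrix (Fin n) s ℝ), Fintype.card s = k + 1 ∧ Wᵀ * W = 1 ∧
      det (Wᵀ * (Xᵀ * X) * W) = (∏ i ∈ Iic k, svalDesc X i) ^ 2 := by
  set hX := isHermitian_conjTranspose_mul_self X
  set s := (Iic k).map (Fin.revPerm.trans (Tuple.sort hX.eigenvalues)).toEmbedding
  obtain ⟨W, hWW, hdet⟩ := hX.exists_transpose_mul_self_eq_one_det_eq_prod s
  refine ⟨s, W, by rw [Fintype.card_coe, card_map, Fin.card_Iic], hWW, ?_⟩
  rw [sq_prod_svalDesc]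
  exact hdet.trans (prod_map _ _ _)

end SingularValues

theorem horn_inequality_general {n : ℕ} (A B : Matrix (Fin n) (Fin n) ℝ) :
    ∀ k : Fin n, ∏ i ∈ Finset.Iic k, svalDesc (A * B) i ≤
      ∏ i ∈ Finset.Iic k, (svalDesc A i * svalDesc B i) := by
  intro k
  obtain ⟨s, W, hs, hWW, hdet⟩ := exists_det_transpose_mul_mul_eq_sq_prod_svalDesc (A * B) k
  have hsq : (∏ i ∈ Iic k, svalDesc (A * B) i) ^ 2 ≤
      ((∏ i ∈ Iic k, svalDesc A i) * ∏ i ∈ Iic k, svalDesc B i) ^ 2 :=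
    calc (∏ i ∈ Iic k, svalDesc (A * B) i) ^ 2
        = det ((B * W)ᵀ * (Aᵀ * A) * (B * W)) := by
          rw [← hdet]; simp only [transpose_mul, Matrix.mul_assoc]
      _ ≤ (∏ i ∈ Iic k, svalDesc A i) ^ 2 * det ((B * W)ᵀ * (B * W)) :=
          det_transpose_mul_mul_le_sq_prod_svalDesc A k _ hs
      _ ≤ (∏ i ∈ Iic k, svalDesc A i) ^ 2 *
            ((∏ i ∈ Iic k, svalDesc B i) ^ 2 * det (Wᵀ * W)) := by
          rw [transpose_mul, Matrix.mul_assoc, ← Matrix.mul_assoc Bᵀ, ← Matrix.mul_assoc]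
          gcongr
          exact det_transpose_mul_mul_le_sq_prod_svalDesc B k W hs
      _ = ((∏ i ∈ Iic k, svalDesc A i) * ∏ i ∈ Iic k, svalDesc B i) ^ 2 := by
          rw [hWW, det_one]; ring
  rw [prod_mul_distrib]
  exact le_of_pow_le_pow_left₀ two_ne_zero
    (mul_nonneg (prod_nonneg fun i _ => Real.sqrt_nonneg _)
      (prod_nonneg fun i _ => Real.sqrt_nonneg _)) hsq

/-- Horn inequality: the product of the k largest singular values of A·B is at most the
product of the k largest singular values of A times that of B, for every k. -/
theorem horn_inequality {n : ℕ} (A B : Matrix (Fin n) (Fin n) ℝ)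
    (hA : IsUnit A.det) (hB : IsUnit B.det) :
    ∀ k : Fin n, ∏ i ∈ Finset.Iic k, svalDesc (A * B) i ≤
      ∏ i ∈ Finset.Iic k, (svalDesc A i * svalDesc B i) :=
  horn_inequality_general A B
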